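/- arXiv:1306.5872 — 11 statements merged into one kernel-verified Lean document; each statement's English description precedes it below -/
import Mathlib

section
/- Let T be a polynomial of degree n ≥ 1 with complex coefficients. Then not all zeros of T² − 1 can have even multiplicity; i.e., T² − 1 has at least two roots (counted without multiplicity but distinguishing parity) of odd multiplicity. -/
/-!
The Mason–Stothers theorem applied to `(T - 1) + 2 - (T + 1) = 0` shows that `T ^ 2 - 1` has more
than `deg T` distinct roots. If all of them had even multiplicity, `T ^ 2 - 1` would be a constant
times a square and would have at most `deg (T ^ 2 - 1) / 2 = deg T` distinct roots.
-/

open Polynomial UniqueFactorizationMonoid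

namespace Polynomial

variable {k : Type*} [Field k] [DecidableEq k]

theorem exists_eq_C_mul_sq_of_even_rootMultiplicity [IsAlgClosed k] {Q : k[X]}
    (h : ∀ a, Q.IsRoot a → Even (Q.rootMultiplicity a)) :
    ∃ S : k[X], Q = C Q.leadingCoeff * S ^ 2 := by
  refine ⟨∏ a ∈ Q.roots.toFinset, (X - C a) ^ (Q.rootMultiplicity a / 2), ?_⟩
  conv_lhs => rw [(IsAlgClosed.splits Q).eq_prod_roots, Finset.prod_multiset_map_count]
  rw [← Finset.prod_pow]
  congr 1
  refine Finset.prod_congr rfl fun a ha => ?_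
  have hroot : Q.IsRoot a := (mem_roots'.mp (Multiset.mem_toFinset.mp ha)).2
  rw [count_roots, ← pow_mul, Nat.div_mul_cancel (even_iff_two_dvd.mp (h a hroot))]

theorem two_mul_natDegree_radical_le_of_even_rootMultiplicity [IsAlgClosed k]
    {Q : k[X]} (hQ : Q ≠ 0) (h : ∀ a, Q.IsRoot a → Even (Q.rootMultiplicity a)) :
    2 * (radical Q).natDegree ≤ Q.natDegree := by
  obtain ⟨S, hS⟩ := exists_eq_C_mul_sq_of_even_rootMultiplicity h
  have hunit : IsUnit (C Q.leadingCoeff) := isUnit_C.mpr (leadingCoeff_ne_zero.mpr hQ).isUnit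
  calc 2 * (radical Q).natDegree = 2 * (radical S).natDegree := by
        rw [hS, radical_mul_of_isUnit_left hunit, radical_pow S two_ne_zero]
    _ ≤ 2 * S.natDegree := Nat.mul_le_mul_left 2 natDegree_radical_le
    _ = Q.natDegree := by
        rw [hS, natDegree_C_mul (leadingCoeff_ne_zero.mpr hQ), natDegree_pow, mul_comm]

theorem natDegree_lt_natDegree_radical_sq_sub_one [CharZero k] {T : k[X]}
    (hT : T.natDegree ≠ 0) : T.natDegree < (radical (T ^ 2 - 1)).natDegree := by
  have hdeg₁ : (T - 1).natDegree = T.natDegree := by rw [← C_1, natDegree_sub_C]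
  have hdeg₂ : (-(T + 1)).natDegree = T.natDegree := by
    rw [natDegree_neg, ← C_1, natDegree_add_C]
  have hunit {c : k} (hc : c ≠ 0) : IsUnit (C c) := isUnit_C.mpr hc.isUnit
  have hcop : IsCoprime (T - 1) (C 2) := by
    simpa using
      (isCoprime_mul_unit_left_right (hunit two_ne_zero) (T - 1) 1).mpr isCoprime_one_right
  have hsum : (T - 1) + C 2 + -(T + 1) = 0 := by rw [C_ofNat]; ring
  have hprod : (T - 1) * C 2 * -(T + 1) = C (-2) * (T ^ 2 - 1) := by rw [C_neg, C_ofNat]; ring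
  rcases Polynomial.abc (ne_zero_of_natDegree_gt (n := 0) (by omega)) (hunit two_ne_zero).ne_zero
    (ne_zero_of_natDegree_gt (n := 0) (by omega)) hcop hsum with ⟨h, -, -⟩ | ⟨h, -, -⟩
  · rwa [hprod, radical_mul_of_isUnit_left (hunit (by norm_num)), hdeg₁, Nat.add_one_le_iff] at h
  · rw [derivative_eq_zero, hdeg₁] at h
    exact absurd h hT

end Polynomial

theorem exists_odd_multiplicity_root (T : Polynomial ℂ) (hn : 1 ≤ T.natDegree) :
    ∃ z : ℂ, (T ^ 2 - 1).IsRoot z ∧ Odd ((T ^ 2 - 1).rootMultiplicity z) := by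
  classical
  by_contra! h
  have hdeg : (T ^ 2 - 1).natDegree = 2 * T.natDegree := by
    rw [← C_1, natDegree_sub_C, natDegree_pow, mul_comm]
  have hne : T ^ 2 - 1 ≠ 0 := ne_zero_of_natDegree_gt (n := 0) (by omega)
  have hlt := natDegree_lt_natDegree_radical_sq_sub_one (T := T) (by omega)
  have hle := two_mul_natDegree_radical_le_of_even_rootMultiplicity hne
    fun z hz => Nat.not_odd_iff_even.mp (h z hz)
  omega
end

section
/- Let T be a polynomial of degree n ≥ 1 with complex coefficients. Then there exist a unique integer ℓ with 1 ≤ ℓ ≤ n, a unique monic polynomial H of degree 2ℓ with pairwise distinct roots, and a unique polynomial U of degree n − ℓ with the same leading coefficient as T, such that T² − 1 = H · U². Moreover, the roots of H are exactly the roots of T² − 1 of odd multiplicity. -/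
/-!
Factor `T² - 1 = c² ∏ (X - a)^{m_a}` over `ℂ`, where `c` is the leading coefficient of `T`,
and split each multiplicity as `m_a = (m_a mod 2) + 2 ⌊m_a/2⌋`: `H` collects the roots of odd
multiplicity and `U = c ∏ (X - a)^{⌊m_a/2⌋}`. If `H` were `1`, then `(T - U)(T + U) = 1` would
force `T` to be constant; so `deg H > 0`, and the degree count `deg H + 2 deg U = 2n` gives
`ℓ ≥ 1`. For uniqueness, a monic squarefree split polynomial is determined by its roots, and `U`
is determined by `U²` and its leading coefficient.
-/

open Polynomial

theorem Multiset.prod_map_eq_prod_odd_count_mul_sq {α M : Type*} [DecidableEq α] [CommMonoid M]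
    (s : Multiset α) (f : α → M) :
    (s.map f).prod = (∏ a ∈ s.toFinset with Odd (s.count a), f a) *
      (∏ a ∈ s.toFinset, f a ^ (s.count a / 2)) ^ 2 := by
  rw [Finset.prod_multiset_map_count, Finset.prod_filter, ← Finset.prod_pow,
    ← Finset.prod_mul_distrib]
  refine Finset.prod_congr rfl fun a _ => ?_
  conv_lhs => rw [← Nat.mod_add_div (s.count a) 2, pow_add, pow_mul']
  congr 1
  split_ifs with hodd
  · rw [Nat.odd_iff.mp hodd, pow_one]
  · rw [Nat.not_odd_iff.mp hodd, pow_zero]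

namespace Polynomial

section CommRing

variable {R : Type*} [CommRing R]

theorem Squarefree.rootMultiplicity_le_one [Nontrivial R] {p : R[X]} (hp : Squarefree p) (a : R) :
    p.rootMultiplicity a ≤ 1 := by
  by_contra! h
  have hdvd : (X - C a) * (X - C a) ∣ p := by
    rw [← sq]
    exact (le_rootMultiplicity_iff hp.ne_zero).mp h
  exact not_isUnit_X_sub_C a (hp _ hdvd)

variable [IsDomain R]

theorem Squarefree.nodup_roots {p : R[X]} (hp : Squarefree p) : p.roots.Nodup := by
  classical
  exact Multiset.nodup_iff_count_le_one.mpr fun a =>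
    (count_roots p).trans_le (hp.rootMultiplicity_le_one a)

theorem Squarefree.isRoot_iff_odd_rootMultiplicity_mul_sq {H U : R[X]}
    (hH : Squarefree H) (hHU : H * U ^ 2 ≠ 0) (z : R) :
    H.IsRoot z ↔ (H * U ^ 2).IsRoot z ∧ Odd ((H * U ^ 2).rootMultiplicity z) := by
  have hUU : U * U ≠ 0 := by rw [← sq]; exact right_ne_zero_of_mul hHU
  rw [← rootMultiplicity_pos hH.ne_zero, ← rootMultiplicity_pos hHU, rootMultiplicity_mul hHU,
    sq, rootMultiplicity_mul hUU, Nat.odd_iff]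
  have := hH.rootMultiplicity_le_one z
  omega

theorem Monic.eq_of_squarefree_of_isRoot_iff {p q : R[X]} (hp : p.Monic) (hq : q.Monic)
    (hp_split : p.Splits) (hq_split : q.Splits) (hp_sf : Squarefree p) (hq_sf : Squarefree q)
    (h : ∀ z, p.IsRoot z ↔ q.IsRoot z) : p = q := by
  have hroots : p.roots = q.roots := (Multiset.Nodup.ext hp_sf.nodup_roots hq_sf.nodup_roots).mpr
    fun a => by rw [mem_roots hp.ne_zero, mem_roots hq.ne_zero, h]
  calc p = (p.roots.map (X - C ·)).prod := hp_split.eq_prod_roots_of_monic hp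
    _ = (q.roots.map (X - C ·)).prod := by rw [hroots]
    _ = q := (hq_split.eq_prod_roots_of_monic hq).symm

theorem natDegree_sq_sub_one {T : R[X]} (hT : 0 < T.natDegree) :
    (T ^ 2 - 1).natDegree = 2 * T.natDegree := by
  rw [natDegree_sub_eq_left_of_natDegree_lt (by rw [natDegree_one, natDegree_pow]; omega),
    natDegree_pow, mul_comm]

theorem leadingCoeff_sq_sub_one {T : R[X]} (hT : 0 < T.natDegree) :
    (T ^ 2 - 1).leadingCoeff = T.leadingCoeff ^ 2 := by
  refine (leadingCoeff_sub_of_degree_lt ?_).trans (leadingCoeff_pow T 2)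
  rw [degree_one, ← natDegree_pos_iff_degree_pos, natDegree_pow]
  omega

variable [NeZero (2 : R)]

theorem eq_of_sq_eq_sq_of_leadingCoeff_eq {p q : R[X]} (h : p ^ 2 = q ^ 2)
    (hlc : p.leadingCoeff = q.leadingCoeff) : p = q := by
  rcases sq_eq_sq_iff_eq_or_eq_neg.mp h with h | rfl
  · exact h
  · rw [leadingCoeff_neg] at hlc
    have h2 : (2 : R) * q.leadingCoeff = 0 := by linear_combination -hlc
    have hq : q = 0 := leadingCoeff_eq_zero.mp ((mul_eq_zero.mp h2).resolve_left two_ne_zero)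
    rw [hq, neg_zero]

theorem natDegree_eq_zero_of_sq_sub_one_eq_sq {T U : R[X]} (h : T ^ 2 - 1 = U ^ 2) :
    T.natDegree = 0 := by
  have hsub : (T - U).natDegree = 0 :=
    natDegree_eq_zero_of_isUnit (IsUnit.of_mul_eq_one (T + U) (by linear_combination h))
  have hadd : (T + U).natDegree = 0 :=
    natDegree_eq_zero_of_isUnit (IsUnit.of_mul_eq_one (T - U) (by linear_combination h))
  have h2T : (C 2 * T).natDegree = 0 := by
    rw [show C 2 * T = (T - U) + (T + U) by rw [map_ofNat]; ring]
    exact Nat.eq_zero_of_le_zero ((natDegree_add_le _ _).trans (by omega))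
  rwa [natDegree_C_mul two_ne_zero] at h2T

end CommRing

theorem exists_monic_squarefree_mul_sq {K : Type*} [Field K] {P : K[X]} (hP : P.Splits) {c : K}
    (hc : c ^ 2 = P.leadingCoeff) :
    ∃ H U : K[X], H.Monic ∧ Squarefree H ∧ U.leadingCoeff = c ∧ P = H * U ^ 2 := by
  classical
  set s := P.roots
  have hmonic : (∏ a ∈ s.toFinset, (X - C a) ^ (s.count a / 2)).Monic :=
    monic_prod_of_monic _ _ fun a _ => (monic_X_sub_C a).pow _
  refine ⟨∏ a ∈ s.toFinset with Odd (s.count a), (X - C a),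
    C c * ∏ a ∈ s.toFinset, (X - C a) ^ (s.count a / 2), monic_prod_X_sub_C _ _, ?_, ?_, ?_⟩
  · exact (separable_prod_X_sub_C_iff'.mpr fun _ _ _ _ h => h).squarefree
  · rw [leadingCoeff_mul, leadingCoeff_C, hmonic.leadingCoeff, mul_one]
  · conv_lhs => rw [hP.eq_prod_roots, ← hc, Multiset.prod_map_eq_prod_odd_count_mul_sq]
    rw [C_pow]
    ring

end Polynomial

theorem pell_decomposition_unique (T : Polynomial ℂ) (n : ℕ)
    (hn : 1 ≤ n) (hdeg : T.natDegree = n) :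
    ∃! p : ℕ × Polynomial ℂ × Polynomial ℂ,
      1 ≤ p.1 ∧ p.1 ≤ n ∧
      p.2.1.Monic ∧ p.2.1.natDegree = 2 * p.1 ∧ Squarefree p.2.1 ∧
      p.2.2.natDegree = n - p.1 ∧ p.2.2.leadingCoeff = T.leadingCoeff ∧
      T ^ 2 - 1 = p.2.1 * p.2.2 ^ 2 ∧
      (∀ z : ℂ, p.2.1.IsRoot z ↔
        ((T ^ 2 - 1).IsRoot z ∧ Odd ((T ^ 2 - 1).rootMultiplicity z))) := by
  have hT : 0 < T.natDegree := hdeg ▸ hn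
  obtain ⟨H, U, hHm, hHsf, hUlc, hPHU⟩ := exists_monic_squarefree_mul_sq
    (IsAlgClosed.splits (T ^ 2 - 1)) (leadingCoeff_sq_sub_one hT).symm
  have hPdeg : (T ^ 2 - 1).natDegree = 2 * n := hdeg ▸ natDegree_sq_sub_one hT
  have hHU : H * U ^ 2 ≠ 0 := by
    intro h0
    rw [hPHU, h0, natDegree_zero] at hPdeg
    omega
  have hdegs : H.natDegree + 2 * U.natDegree = 2 * n := by
    rw [← hPdeg, hPHU, natDegree_mul hHm.ne_zero (right_ne_zero_of_mul hHU), natDegree_pow]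
  have hH1 : H.natDegree ≠ 0 := by
    intro h0
    rw [hHm.natDegree_eq_zero.mp h0, one_mul] at hPHU
    exact hT.ne' (natDegree_eq_zero_of_sq_sub_one_eq_sq hPHU)
  have hroots (z : ℂ) := hPHU ▸ hHsf.isRoot_iff_odd_rootMultiplicity_mul_sq hHU z
  refine ⟨⟨n - U.natDegree, H, U⟩, ⟨by omega, by omega, hHm, by dsimp only; omega, hHsf,
    by dsimp only; omega, hUlc, hPHU, hroots⟩, ?_⟩
  rintro ⟨ℓ', H', U'⟩ ⟨-, -, hH'm, hH'deg, hH'sf, -, hU'lc, hPH'U', hroots'⟩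
  obtain rfl : H' = H := hH'm.eq_of_squarefree_of_isRoot_iff hHm (IsAlgClosed.splits _)
    (IsAlgClosed.splits _) hH'sf hHsf fun z => (hroots' z).trans (hroots z).symm
  obtain rfl : U' = U := eq_of_sq_eq_sq_of_leadingCoeff_eq
    (mul_left_cancel₀ hHm.ne_zero (hPH'U'.symm.trans hPHU)) (hU'lc.trans hUlc.symm)
  dsimp only at hH'deg
  simp only [Prod.mk.injEq, and_true]
  omega
end

section
/- Let T be a polynomial of degree n with complex coefficients, and suppose T² − 1 = H·U² where H(z) = (z−a₁)(z−a₂)(z−a₃)(z−a₄) with a₁,a₂,a₃,a₄ pairwise distinct and U a polynomial of degree n−2 with the same leading coefficient as T. Then there exists z* ∈ ℂ such that T'(z) = n·(z − z*)·U(z). -/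
open Polynomial

theorem derivative_factorization (T U : Polynomial ℂ) (n : ℕ) (hn : 2 ≤ n)
    (hdeg : T.natDegree = n) (a₁ a₂ a₃ a₄ : ℂ)
    (hdist : a₁ ≠ a₂ ∧ a₁ ≠ a₃ ∧ a₁ ≠ a₄ ∧ a₂ ≠ a₃ ∧ a₂ ≠ a₄ ∧ a₃ ≠ a₄)
    (hU : U.natDegree = n - 2) (hlc : U.leadingCoeff = T.leadingCoeff)
    (hpell : T ^ 2 - 1 = (X - C a₁) * (X - C a₂) * (X - C a₃) * (X - C a₄) * U ^ 2) :
    ∃ zs : ℂ, derivative T = C (n : ℂ) * (X - C zs) * U := by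
  set H : Polynomial ℂ := (X - C a₁) * (X - C a₂) * (X - C a₃) * (X - C a₄) with hH
  have hT0 : T ≠ 0 := by
    intro h
    rw [h, natDegree_zero] at hdeg
    omega
  have hlcT : T.leadingCoeff ≠ 0 := leadingCoeff_ne_zero.mpr hT0
  have hU0 : U ≠ 0 := by
    intro h
    rw [h, leadingCoeff_zero] at hlc
    exact hlcT hlc.symm
  have hn0 : (n : ℂ) ≠ 0 := Nat.cast_ne_zero.mpr (by omega)
  have hncast : ((n - 1 : ℕ) : ℂ) = (n : ℂ) - 1 := by
    push_cast [Nat.cast_sub (by omega : 1 ≤ n)]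
    ring
  -- coprimality from the Pell equation
  have cop : IsCoprime U T := ⟨-(H * U), T, by linear_combination hpell⟩
  -- differentiate the Pell equation
  have hder : C 2 * T * derivative T = U * (derivative H * U + C 2 * H * derivative U) := by
    have := congrArg derivative hpell
    simp only [derivative_sub, derivative_one, derivative_mul, derivative_pow] at this
    ring_nf at this ⊢
    linear_combination this
  have hdvdTT : U ∣ C 2 * (T * derivative T) := ⟨derivative H * U + C 2 * H * derivative U,
    by linear_combination hder⟩
  have h2 : IsUnit (C (2:ℂ) : Polynomial ℂ) := isUnit_C.mpr (by norm_num)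
  have hdvd : U ∣ derivative T :=
    cop.dvd_of_dvd_mul_left (h2.dvd_mul_left.mp hdvdTT)
  obtain ⟨Q, hQ⟩ := hdvd
  -- coefficient of degree n-1 in derivative T
  have hcoef : (derivative T).coeff (n - 1) = (n : ℂ) * T.leadingCoeff := by
    rw [coeff_derivative]
    have hsucc : n - 1 + 1 = n := by omega
    rw [hsucc, ← hdeg, ← leadingCoeff]
    rw [hdeg, hncast]
    ring
  have hcoef0 : (derivative T).coeff (n - 1) ≠ 0 := by
    rw [hcoef]
    exact mul_ne_zero hn0 hlcT
  have hdT : (derivative T).natDegree = n - 1 := by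
    refine le_antisymm ?_ (le_natDegree_of_ne_zero hcoef0)
    have := natDegree_derivative_le T
    omega
  have hlcd : (derivative T).leadingCoeff = (n : ℂ) * T.leadingCoeff := by
    rw [leadingCoeff, hdT, hcoef]
  have hdT0 : derivative T ≠ 0 := fun h => hcoef0 (by rw [h, coeff_zero])
  have hQ0 : Q ≠ 0 := by
    rintro rfl
    rw [mul_zero] at hQ
    exact hdT0 hQ
  have hdQ : Q.natDegree = 1 := by
    have := natDegree_mul hU0 hQ0
    rw [← hQ, hdT, hU] at this
    omega
  have hlcQ : Q.leadingCoeff = (n : ℂ) := by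
    have hm := leadingCoeff_mul U Q
    rw [← hQ, hlcd, hlc] at hm
    have h3 : T.leadingCoeff * Q.leadingCoeff = T.leadingCoeff * (n : ℂ) := by
      linear_combination -hm
    exact mul_left_cancel₀ hlcT h3
  have hQeq : Q = C (n : ℂ) * X + C (Q.coeff 0) := by
    have h1 : Q.coeff 1 = (n : ℂ) := by rw [← hlcQ, leadingCoeff, hdQ]
    have h2 := Polynomial.eq_X_add_C_of_natDegree_le_one (hdQ.le)
    rw [h1] at h2
    exact h2
  refine ⟨-(Q.coeff 0) / (n : ℂ), ?_⟩
  have hc : C (n : ℂ) * C (-(Q.coeff 0) / (n : ℂ)) = - C (Q.coeff 0) := by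
    rw [← C_mul, ← map_neg]
    congr 1
    field_simp
  conv_lhs => rw [hQ, hQeq]
  linear_combination U * hc
end

section
/- Under the Pell equation T² − 1 = H·U² with H of degree 4 having four pairwise distinct roots, and T' = n(z − z*)U: if z* is a zero of U, then either z* is a zero of U of multiplicity at least 2, or z* is a zero of H. -/
open Polynomial

theorem zstar_zero_of_U (T U : Polynomial ℂ) (n : ℕ) (hn : 2 ≤ n)
    (hdeg : T.natDegree = n) (a₁ a₂ a₃ a₄ : ℂ)
    (hdist : a₁ ≠ a₂ ∧ a₁ ≠ a₃ ∧ a₁ ≠ a₄ ∧ a₂ ≠ a₃ ∧ a₂ ≠ a₄ ∧ a₃ ≠ a₄)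
    (hU : U.natDegree = n - 2) (hlc : U.leadingCoeff = T.leadingCoeff)
    (hpell : T ^ 2 - 1 = (X - C a₁) * (X - C a₂) * (X - C a₃) * (X - C a₄) * U ^ 2)
    (zs : ℂ) (hder : derivative T = C (n : ℂ) * (X - C zs) * U) :
    U.IsRoot zs → 2 ≤ U.rootMultiplicity zs ∨ ((X - C a₁) * (X - C a₂) * (X - C a₃) * (X - C a₄)).IsRoot zs := by
  intro hroot
  set H : Polynomial ℂ := (X - C a₁) * (X - C a₂) * (X - C a₃) * (X - C a₄) with hH
  by_cases hHz : H.IsRoot zs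
  · exact Or.inr hHz
  left
  have hT0 : T ≠ 0 := by
    intro h
    rw [h, natDegree_zero] at hdeg
    omega
  have hU0 : U ≠ 0 := by
    intro h
    rw [h, leadingCoeff_zero] at hlc
    exact hT0 (leadingCoeff_eq_zero.mp hlc.symm)
  -- differentiate the Pell equation
  have hderiv : derivative (T ^ 2 - 1) = derivative (H * U ^ 2) := by rw [hpell]
  rw [derivative_sub, derivative_one, sub_zero, derivative_pow, derivative_mul,
    derivative_pow, hder] at hderiv
  -- hderiv : C 2 * T ^ 1 * (C n * (X - zs) * U) = H' * U^2 + H * (C 2 * U^1 * U')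
  have hcancel : U * (C (2:ℂ) * T * (C (n:ℂ) * (X - C zs))) =
      U * (derivative H * U + H * (C (2:ℂ) * derivative U)) := by
    have := hderiv
    push_cast at this ⊢
    ring_nf at this ⊢
    linear_combination this
  have key : C (2:ℂ) * T * (C (n:ℂ) * (X - C zs)) =
      derivative H * U + H * (C (2:ℂ) * derivative U) := by
    exact mul_left_cancel₀ hU0 hcancel
  have heval := congrArg (fun p => p.eval zs) key
  simp only [eval_mul, eval_add, eval_sub, eval_C, eval_X, sub_self, mul_zero] at heval
  rw [hroot] at heval
  have hHez : H.eval zs ≠ 0 := hHz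
  have hU' : (derivative U).IsRoot zs := by
    have : H.eval zs * (2 * eval zs (derivative U)) = 0 := by linear_combination -heval
    rcases mul_eq_zero.mp this with h | h
    · exact absurd h hHez
    · have : eval zs (derivative U) = 0 := by
        rcases mul_eq_zero.mp h with h2 | h2
        · norm_num at h2
        · exact h2
      exact this
  have := (one_lt_rootMultiplicity_iff_isRoot hU0).mpr ⟨hroot, hU'⟩
  omega
end

section
/- Under the Pell equation T² − 1 = H·U² with H of degree 4 having four pairwise distinct roots, and T'(z) = n(z − z*)U(z): if z* is a zero of H, then z* is a simple zero of U. -/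
/-! Since the roots of `H` are distinct, `z*` is a simple zero of `H`, and `T(z*)² = 1`. With
`ε = T(z*)` the factor `T + ε` does not vanish at `z*`, so `(T - ε)(T + ε) = H U²` gives `T - ε` a
zero of order `1 + 2m` at `z*`, where `m` is the order of `U`. Its derivative `T' = n (X - z*) U`
then has order `2m` there, but also `1 + m`, so `m = 1`. -/

open Polynomial

namespace Polynomial

theorem rootMultiplicity_multiset_prod_X_sub_C_of_nodup {R : Type*} [CommRing R] [IsDomain R]
    {s : Multiset R} (hs : s.Nodup) {z : R} (hz : (s.map fun a => X - C a).prod.IsRoot z) :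
    (s.map fun a => X - C a).prod.rootMultiplicity z = 1 := by
  classical
  have hne : (s.map fun a => X - C a).prod ≠ 0 := (monic_multiset_prod_of_monic _ _
    fun a _ => monic_X_sub_C a).ne_zero
  have hzs : z ∈ s := by rwa [← roots_multiset_prod_X_sub_C s, mem_roots hne]
  rw [← count_roots, roots_multiset_prod_X_sub_C, Multiset.count_eq_one_of_mem hs hzs]

section Pell

variable {K : Type*} [Field K] {T H U : K[X]} {z : K}

theorem rootMultiplicity_sub_C_eval_of_sq_sub_one_eq [NeZero (2 : K)]
    (hpell : T ^ 2 - 1 = H * U ^ 2) (hHU : H * U ^ 2 ≠ 0) (hz : H.IsRoot z) :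
    (T - C (T.eval z)).rootMultiplicity z = H.rootMultiplicity z + 2 * U.rootMultiplicity z := by
  set ε := T.eval z
  have hε : ε ^ 2 = 1 := by
    simpa [hz.eq_zero, sub_eq_zero] using congrArg (eval z) hpell
  have hfac : (T - C ε) * (T + C ε) = H * U ^ 2 := by
    rw [← hpell, ← C_1, ← hε, C_pow]; ring
  have hplus : ¬(T + C ε).IsRoot z := by
    have : ε ≠ 0 := by intro h; simp [h] at hε
    simp only [IsRoot, eval_add, eval_C]
    change ε + ε ≠ 0
    rw [← two_mul]
    exact mul_ne_zero two_ne_zero this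
  have hU : U ≠ 0 := by rintro rfl; simp at hHU
  have hmult := congrArg (rootMultiplicity z) hfac
  rw [rootMultiplicity_mul (hfac ▸ hHU), rootMultiplicity_eq_zero hplus,
    rootMultiplicity_mul hHU, sq, rootMultiplicity_mul (mul_ne_zero hU hU)] at hmult
  omega

theorem rootMultiplicity_eq_one_of_sq_sub_one_eq_of_derivative_eq [CharZero K] {c : K}
    (hpell : T ^ 2 - 1 = H * U ^ 2) (hH : H.rootMultiplicity z = 1) (hU : U ≠ 0) (hc : c ≠ 0)
    (hder : derivative T = C c * (X - C z) * U) :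
    U.rootMultiplicity z = 1 := by
  have hH0 : H ≠ 0 := by rintro rfl; simp at hH
  have hz : H.IsRoot z := (rootMultiplicity_pos hH0).mp (by omega)
  have hsub := rootMultiplicity_sub_C_eval_of_sq_sub_one_eq hpell
    (mul_ne_zero hH0 (pow_ne_zero 2 hU)) hz
  have hder' : (T - C (T.eval z)).derivative.rootMultiplicity z = 1 + U.rootMultiplicity z := by
    rw [derivative_sub, derivative_C, sub_zero, hder,
      rootMultiplicity_mul (mul_ne_zero (mul_ne_zero (C_ne_zero.mpr hc) (X_sub_C_ne_zero z)) hU),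
      rootMultiplicity_mul (mul_ne_zero (C_ne_zero.mpr hc) (X_sub_C_ne_zero z)),
      rootMultiplicity_C, rootMultiplicity_X_sub_C_self, zero_add]
  have hderiv := derivative_rootMultiplicity_of_root (p := T - C (T.eval z)) (t := z) (by simp)
  omega

end Pell

end Polynomial

theorem zstar_zero_of_H_simple_zero_of_U_general (T U : Polynomial ℂ) (n : ℕ) (hn : 3 ≤ n)
    (hdeg : T.natDegree = n) (a₁ a₂ a₃ a₄ : ℂ)
    (hdist : a₁ ≠ a₂ ∧ a₁ ≠ a₃ ∧ a₁ ≠ a₄ ∧ a₂ ≠ a₃ ∧ a₂ ≠ a₄ ∧ a₃ ≠ a₄)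
    (hpell : T ^ 2 - 1 = (X - C a₁) * (X - C a₂) * (X - C a₃) * (X - C a₄) * U ^ 2)
    (zs : ℂ) (hder : derivative T = C (n : ℂ) * (X - C zs) * U) :
    ((X - C a₁) * (X - C a₂) * (X - C a₃) * (X - C a₄)).IsRoot zs → U.rootMultiplicity zs = 1 := by
  intro hroot
  have hH : (X - C a₁) * (X - C a₂) * (X - C a₃) * (X - C a₄) =
      (({a₁, a₂, a₃, a₄} : Multiset ℂ).map fun a => X - C a).prod := by
    simp only [Multiset.insert_eq_cons, Multiset.map_cons, Multiset.map_singleton,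
      Multiset.prod_cons, Multiset.prod_singleton]
    ring
  have hnodup : ({a₁, a₂, a₃, a₄} : Multiset ℂ).Nodup := by
    simp only [Multiset.insert_eq_cons, Multiset.nodup_cons, Multiset.mem_cons,
      Multiset.mem_singleton, not_or, Multiset.nodup_singleton, and_true]
    tauto
  have hU : U ≠ 0 := by
    rintro rfl
    have : T.natDegree = 0 := by simpa using hder
    omega
  refine rootMultiplicity_eq_one_of_sq_sub_one_eq_of_derivative_eq hpell ?_ hU
    (by exact_mod_cast (by omega : n ≠ 0)) hder
  rw [hH] at hroot ⊢
  exact rootMultiplicity_multiset_prod_X_sub_C_of_nodup hnodup hroot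

theorem zstar_zero_of_H_simple_zero_of_U (T U : Polynomial ℂ) (n : ℕ) (hn : 3 ≤ n)
    (hdeg : T.natDegree = n) (a₁ a₂ a₃ a₄ : ℂ)
    (hdist : a₁ ≠ a₂ ∧ a₁ ≠ a₃ ∧ a₁ ≠ a₄ ∧ a₂ ≠ a₃ ∧ a₂ ≠ a₄ ∧ a₃ ≠ a₄)
    (hU : U.natDegree = n - 2) (hlc : U.leadingCoeff = T.leadingCoeff)
    (hpell : T ^ 2 - 1 = (X - C a₁) * (X - C a₂) * (X - C a₃) * (X - C a₄) * U ^ 2)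
    (zs : ℂ) (hder : derivative T = C (n : ℂ) * (X - C zs) * U) :
    ((X - C a₁) * (X - C a₂) * (X - C a₃) * (X - C a₄)).IsRoot zs → U.rootMultiplicity zs = 1 :=
  zstar_zero_of_H_simple_zero_of_U_general T U n hn hdeg a₁ a₂ a₃ a₄ hdist hpell zs hder
end

section
/- Under the Pell equation T² − 1 = H·U² with H of degree 4 having four pairwise distinct roots, and T'(z) = n(z − z*)U(z): any common zero of H and U must equal z*. -/
open Polynomial

theorem common_zero_eq_zstar (T U : Polynomial ℂ) (n : ℕ) (hn : 2 ≤ n)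
    (hdeg : T.natDegree = n) (a₁ a₂ a₃ a₄ : ℂ)
    (hdist : a₁ ≠ a₂ ∧ a₁ ≠ a₃ ∧ a₁ ≠ a₄ ∧ a₂ ≠ a₃ ∧ a₂ ≠ a₄ ∧ a₃ ≠ a₄)
    (hU : U.natDegree = n - 2) (hlc : U.leadingCoeff = T.leadingCoeff)
    (hpell : T ^ 2 - 1 = (X - C a₁) * (X - C a₂) * (X - C a₃) * (X - C a₄) * U ^ 2)
    (zs : ℂ) (hder : derivative T = C (n : ℂ) * (X - C zs) * U) :
    ∀ z : ℂ, ((X - C a₁) * (X - C a₂) * (X - C a₃) * (X - C a₄)).IsRoot z → U.IsRoot z → z = zs := by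
  intro z hH hU0
  set H : Polynomial ℂ := (X - C a₁) * (X - C a₂) * (X - C a₃) * (X - C a₄) with hHdef
  have hT0 : T ≠ 0 := by
    intro h
    rw [h, natDegree_zero] at hdeg
    omega
  have hUne : U ≠ 0 := by
    intro h
    rw [h, leadingCoeff_zero] at hlc
    exact hT0 (leadingCoeff_eq_zero.mp hlc.symm)
  have h1 := congrArg derivative hpell
  simp only [derivative_sub, derivative_one, derivative_pow, derivative_mul, hder, Nat.cast_ofNat, map_ofNat, pow_one] at h1
  have key : U * (2 * C (n : ℂ) * T * (X - C zs)) =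
      U * (derivative H * U + H * (2 * derivative U)) := by
    linear_combination h1
  have key2 := mul_left_cancel₀ hUne key
  have hev := congrArg (eval z) key2
  simp only [eval_mul, eval_add, eval_sub, eval_C, eval_X, eval_ofNat] at hev
  have hUz : U.eval z = 0 := hU0
  have hHz : H.eval z = 0 := hH
  rw [hUz, hHz] at hev
  -- hev : 2 * n * T.eval z * (z - zs) = 0
  have hTz : T.eval z ≠ 0 := by
    have := congrArg (eval z) hpell
    simp only [eval_sub, eval_pow, eval_one, eval_mul] at this
    rw [hUz] at this
    intro h
    rw [h] at this
    simp at this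
  have hnz : (n : ℂ) ≠ 0 := Nat.cast_ne_zero.mpr (by omega)
  have hnz2 : (2 : ℂ) * n * T.eval z ≠ 0 := by
    exact mul_ne_zero (mul_ne_zero two_ne_zero hnz) hTz
  have : (2 : ℂ) * n * T.eval z * (z - zs) = 0 := by linear_combination hev
  have := (mul_eq_zero.mp this).resolve_left hnz2
  exact sub_eq_zero.mp this
end

section
/- Under the Pell equation T² − 1 = H·U² with H of degree 4 having four pairwise distinct roots, and T'(z) = n(z − z*)U(z): if U has a zero y* of multiplicity greater than one, then y* = z* and z* is a zero of U of multiplicity exactly two. -/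
open Polynomial

theorem multiple_zero_of_U_eq_zstar (T U : Polynomial ℂ) (n : ℕ) (hn : 2 ≤ n)
    (hdeg : T.natDegree = n) (a₁ a₂ a₃ a₄ : ℂ)
    (hdist : a₁ ≠ a₂ ∧ a₁ ≠ a₃ ∧ a₁ ≠ a₄ ∧ a₂ ≠ a₃ ∧ a₂ ≠ a₄ ∧ a₃ ≠ a₄)
    (hU : U.natDegree = n - 2) (hlc : U.leadingCoeff = T.leadingCoeff)
    (hpell : T ^ 2 - 1 = (X - C a₁) * (X - C a₂) * (X - C a₃) * (X - C a₄) * U ^ 2)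
    (zs : ℂ) (hder : derivative T = C (n : ℂ) * (X - C zs) * U) :
    ∀ y : ℂ, 2 ≤ U.rootMultiplicity y → y = zs ∧ U.rootMultiplicity zs = 2 := by
  intro y hy
  have hT0 : T ≠ 0 := by
    intro h
    rw [h, natDegree_zero] at hdeg
    omega
  have hU0 : U ≠ 0 := by
    intro h
    rw [h, leadingCoeff_zero] at hlc
    exact hT0 (leadingCoeff_eq_zero.mp hlc.symm)
  set m := U.rootMultiplicity y with hm
  have hUy : U.eval y = 0 := by
    have : 0 < m := by omega
    exact (rootMultiplicity_pos hU0).mp this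
  -- T(y) ≠ 0
  have hTy : T.eval y ≠ 0 := by
    intro h
    have := congrArg (eval y) hpell
    simp [hUy, h] at this
  set H : Polynomial ℂ := (X - C a₁) * (X - C a₂) * (X - C a₃) * (X - C a₄) with hH
  -- derivative of Pell equation, cancel U
  have hkey : U * (C 2 * C (n : ℂ) * T * (X - C zs)) =
      U * (derivative H * U + C 2 * H * derivative U) := by
    have h5 := congrArg derivative hpell
    rw [derivative_sub, derivative_pow, derivative_mul (f := H), derivative_pow, hder] at h5
    simp only [derivative_one] at h5
    ring_nf at h5 ⊢
    linear_combination h5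
  have hcancel : C 2 * C (n : ℂ) * T * (X - C zs) =
      derivative H * U + C 2 * H * derivative U :=
    mul_left_cancel₀ hU0 hkey
  -- (X - y)^(m-1) divides the RHS
  have hdvdU : (X - C y) ^ (m - 1) ∣ U :=
    dvd_trans (pow_dvd_pow _ (Nat.sub_le m 1)) (pow_rootMultiplicity_dvd U y)
  have hdvdU' : (X - C y) ^ (m - 1) ∣ derivative U :=
    pow_sub_one_dvd_derivative_of_pow_dvd (pow_rootMultiplicity_dvd U y)
  have hdvd : (X - C y) ^ (m - 1) ∣ C 2 * C (n : ℂ) * T * (X - C zs) := by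
    rw [hcancel]
    exact dvd_add (Dvd.dvd.mul_left hdvdU _) (Dvd.dvd.mul_left hdvdU' _)
  -- compute root multiplicity of LHS
  have hA0 : C 2 * C (n : ℂ) * T * (X - C zs) ≠ 0 := by
    refine mul_ne_zero (mul_ne_zero (mul_ne_zero ?_ ?_) hT0) (X_sub_C_ne_zero zs)
    · simpa using (two_ne_zero : (2 : ℂ) ≠ 0)
    · simp only [ne_eq, C_eq_zero, Nat.cast_eq_zero]
      omega
  have hle : m - 1 ≤ rootMultiplicity y (C 2 * C (n : ℂ) * T * (X - C zs)) :=
    (le_rootMultiplicity_iff hA0).mpr hdvd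
  have hC0 : C 2 * C (n : ℂ) ≠ 0 := by
    refine mul_ne_zero ?_ ?_
    · simpa using (two_ne_zero : (2 : ℂ) ≠ 0)
    · simp only [ne_eq, C_eq_zero, Nat.cast_eq_zero]; omega
  rw [rootMultiplicity_mul (mul_ne_zero (mul_ne_zero hC0 hT0) (X_sub_C_ne_zero zs)),
    rootMultiplicity_mul (mul_ne_zero hC0 hT0),
    rootMultiplicity_mul hC0, rootMultiplicity_C, rootMultiplicity_C,
    rootMultiplicity_eq_zero hTy, rootMultiplicity_X_sub_C] at hle
  by_cases hyz : y = zs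
  · subst hyz
    simp at hle
    constructor
    · rfl
    · omega
  · simp [hyz] at hle
    omega
end

section
/- Let 0 < a < 1 and T₂(z) = (2z² − a² − 1)/(1 − a²). Then the inverse image T₂⁻¹([−1,1]) = {z ∈ ℂ : T₂(z) ∈ [−1,1]} equals [−1,−a] ∪ [a,1] (as a subset of ℂ via the real embedding). -/
theorem inverse_image_two_intervals (a : ℝ) (ha : 0 < a) (ha1 : a < 1) :
    {z : ℂ | ∃ r : ℝ, (2 * z ^ 2 - (a : ℂ) ^ 2 - 1) / (1 - (a : ℂ) ^ 2) = (r : ℂ)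
        ∧ -1 ≤ r ∧ r ≤ 1}
      = (fun r : ℝ => (r : ℂ)) '' (Set.Icc (-1) (-a) ∪ Set.Icc a 1) := by
  have hne : (1 : ℂ) - (a : ℂ) ^ 2 ≠ 0 := by
    intro h
    have h2 : ((1 - a ^ 2 : ℝ) : ℂ) = 0 := by push_cast; linear_combination h
    have h3 : (1 - a ^ 2 : ℝ) = 0 := by exact_mod_cast h2
    nlinarith
  ext z
  simp only [Set.mem_setOf_eq, Set.mem_image, Set.mem_union, Set.mem_Icc]
  constructor
  · rintro ⟨r, heq, hr1, hr2⟩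
    rw [div_eq_iff hne] at heq
    set s : ℝ := (r * (1 - a ^ 2) + a ^ 2 + 1) / 2 with hs
    have hz2 : z ^ 2 = (s : ℂ) := by
      push_cast [hs]
      linear_combination heq / 2
    have him : z.re * z.im + z.im * z.re = 0 := by
      have := congrArg Complex.im hz2
      simpa [pow_two, Complex.mul_im] using this
    have hre : z.re * z.re - z.im * z.im = s := by
      have := congrArg Complex.re hz2
      simpa [pow_two, Complex.mul_re] using this
    have hs1 : a ^ 2 ≤ s := by
      rw [hs]
      nlinarith [mul_nonneg (by linarith : (0:ℝ) ≤ r + 1) (by nlinarith : (0:ℝ) ≤ 1 - a ^ 2)]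
    have hs2 : s ≤ 1 := by
      rw [hs]
      nlinarith [mul_nonneg (by linarith : (0:ℝ) ≤ 1 - r) (by nlinarith : (0:ℝ) ≤ 1 - a ^ 2)]
    have him0 : z.im = 0 := by
      by_contra h
      have h0 : z.re = 0 := by
        have := mul_eq_zero.mp (by linarith [him] : z.re * z.im = 0)
        tauto
      rw [h0] at hre
      nlinarith
    refine ⟨z.re, ?_, ?_⟩
    · rw [him0] at hre
      rcases le_or_gt z.re 0 with h | h
      · left; constructor <;> nlinarith
      · right; constructor <;> nlinarith
    · apply Complex.ext <;> simp [him0]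
  · rintro ⟨x, hx, rfl⟩
    refine ⟨(2 * x ^ 2 - a ^ 2 - 1) / (1 - a ^ 2), ?_, ?_, ?_⟩
    · rw [div_eq_iff hne]
      push_cast
      rw [div_mul_cancel₀ _ hne]
    · rcases hx with ⟨h1, h2⟩ | ⟨h1, h2⟩ <;>
        [skip; skip] <;>
        (rw [le_div_iff₀ (by nlinarith : (0:ℝ) < 1 - a ^ 2)]; nlinarith)
    · rcases hx with ⟨h1, h2⟩ | ⟨h1, h2⟩ <;>
        (rw [div_le_iff₀ (by nlinarith : (0:ℝ) < 1 - a ^ 2)]; nlinarith)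
end

section
/- Let a = 2 and T₂(z) = (i/2)(z² − 2z + 1) = (i/2)(z − 1)². Then T₂⁻¹([−1,1]) equals the union of the two complex segments [i, 2 − i] and [−i, 2 + i]. -/
theorem inverse_image_two_segments :
    {z : ℂ | ∃ r : ℝ, (Complex.I / 2) * (z - 1) ^ 2 = (r : ℂ) ∧ -1 ≤ r ∧ r ≤ 1}
      = segment ℝ Complex.I (2 - Complex.I) ∪ segment ℝ (-Complex.I) (2 + Complex.I) := by
  ext z
  simp only [Set.mem_setOf_eq, Set.mem_union, segment_eq_image', Set.mem_image, Set.mem_Icc]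
  constructor
  · rintro ⟨r, heq, hr1, hr2⟩
    rw [Complex.ext_iff] at heq
    simp [pow_two, Complex.mul_re, Complex.mul_im, Complex.div_re, Complex.div_im,
      Complex.normSq] at heq
    have key : (z.re - 1)^2 = z.im^2 ∧ r = -(z.re - 1) * z.im := by
      constructor <;> nlinarith [heq.1, heq.2]
    obtain ⟨hsq, hrv⟩ := key
    have : z.im = z.re - 1 ∨ z.im = -(z.re - 1) := by
      rcases sq_eq_sq_iff_eq_or_eq_neg.mp hsq.symm with h | h
      · left; exact h
      · right; exact h
    rcases this with h | h
    · -- z = x + (x-1)i : segment from -i to 2+i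
      right
      refine ⟨z.re / 2, ⟨?_, ?_⟩, ?_⟩
      · nlinarith [hrv, h]
      · nlinarith [hrv, h]
      · apply Complex.ext <;>
          simp [Complex.smul_re, Complex.smul_im, h] <;> ring
    · -- z = x + (1-x)i : segment from i to 2-i
      left
      refine ⟨z.re / 2, ⟨?_, ?_⟩, ?_⟩
      · nlinarith [hrv, h]
      · nlinarith [hrv, h]
      · apply Complex.ext <;>
          simp [Complex.smul_re, Complex.smul_im, h] <;> ring
  · rintro (⟨t, ⟨ht0, ht1⟩, rfl⟩ | ⟨t, ⟨ht0, ht1⟩, rfl⟩)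
    · refine ⟨(2*t-1)^2, ?_, by nlinarith, by nlinarith⟩
      have h2 : Complex.I + (t : ℝ) • (2 - Complex.I - Complex.I) - 1
          = ((2*t-1 : ℝ) : ℂ) * (1 - Complex.I) := by
        rw [Complex.real_smul]; push_cast; ring
      rw [h2, mul_pow]
      push_cast
      linear_combination ((2*(t:ℂ)-1)^2) * (Complex.I/2 - 1) * Complex.I_sq
    · refine ⟨-(2*t-1)^2, ?_, by nlinarith, by nlinarith⟩
      have h2 : -Complex.I + (t : ℝ) • (2 + Complex.I - -Complex.I) - 1
          = ((2*t-1 : ℝ) : ℂ) * (1 + Complex.I) := by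
        rw [Complex.real_smul]; push_cast; ring
      rw [h2, mul_pow]
      push_cast
      linear_combination ((2*(t:ℂ)-1)^2) * (Complex.I/2 + 1) * Complex.I_sq
end

section
/- Let T be a nonconstant polynomial with complex coefficients and S = T⁻¹([−1,1]) = {z ∈ ℂ : T(z) ∈ ℝ and −1 ≤ T(z) ≤ 1}. Then the complement ℂ \ S has no bounded connected component; equivalently, the complement of S in the Riemann sphere is connected. -/
open Polynomial

theorem complement_of_inverse_image_no_bounded_component (T : Polynomial ℂ)
    (hT : 1 ≤ T.natDegree) :
    ∀ z ∈ {z : ℂ | ∃ r : ℝ, T.eval z = (r : ℂ) ∧ -1 ≤ r ∧ r ≤ 1}ᶜ,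
      ¬ Bornology.IsBounded
        (connectedComponentIn {z : ℂ | ∃ r : ℝ, T.eval z = (r : ℂ) ∧ -1 ≤ r ∧ r ≤ 1}ᶜ z) := by
  intro z hz hb
  set K : Set ℂ := {z : ℂ | ∃ r : ℝ, T.eval z = (r : ℂ) ∧ -1 ≤ r ∧ r ≤ 1} with hK
  -- K is closed
  have hKcl : IsClosed K := by
    have : K = (fun w => T.eval w) ⁻¹' ((fun r : ℝ => (r : ℂ)) '' Set.Icc (-1 : ℝ) 1) := by
      ext w
      simp only [hK, Set.mem_setOf_eq, Set.mem_preimage, Set.mem_image, Set.mem_Icc]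
      constructor
      · rintro ⟨r, h1, h2, h3⟩; exact ⟨r, ⟨h2, h3⟩, h1.symm⟩
      · rintro ⟨r, ⟨h2, h3⟩, h1⟩; exact ⟨r, h1.symm, h2, h3⟩
    rw [this]
    exact ((isCompact_Icc.image Complex.continuous_ofReal).isClosed).preimage T.continuous
  have hKo : IsOpen Kᶜ := hKcl.isOpen_compl
  set U := connectedComponentIn Kᶜ z with hU
  have hUo : IsOpen U := hKo.connectedComponentIn
  have hzU : z ∈ U := mem_connectedComponentIn hz
  -- frontier U ⊆ K
  have hfr : frontier U ⊆ K := by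
    intro y hy
    by_contra hyK
    have hyKc : y ∈ Kᶜ := hyK
    have hVo : IsOpen (connectedComponentIn Kᶜ y) := hKo.connectedComponentIn
    have hyV : y ∈ connectedComponentIn Kᶜ y := mem_connectedComponentIn hyKc
    have hycl : y ∈ closure U := hy.1
    obtain ⟨w, hwV, hwU⟩ := mem_closure_iff.mp hycl _ hVo hyV
    have h1 := connectedComponentIn_eq hwV
    have h2 := connectedComponentIn_eq hwU
    have : y ∈ U := by rw [hU, h2, ← h1]; exact hyV
    exact hy.2 (by rwa [hUo.interior_eq])
  have hzc : z ∈ closure U := subset_closure hzU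
  -- maximum modulus: ‖T z‖ ≤ 1
  have hTz : ‖T.eval z‖ ≤ 1 := by
    refine Complex.norm_le_of_forall_mem_frontier_norm_le hb
      T.differentiable.diffContOnCl ?_ hzc
    intro w hw
    obtain ⟨r, h1, h2, h3⟩ := hfr hw
    rw [h1, Complex.norm_real]
    exact abs_le.mpr ⟨h2, h3⟩
  -- Im T z = 0 via exp trick
  have him : ∀ c : ℂ, ‖c‖ = 1 → (∀ w ∈ frontier U, (T.eval w).im = 0) →
      ∀ s : ℝ, (s = 1 ∨ s = -1) → Real.exp (-(s * (T.eval z).im)) ≤ 1 := by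
    intro c hc hfim s hs
    have hd : Differentiable ℂ fun w => Complex.exp ((s : ℂ) * Complex.I * T.eval w) :=
      (Complex.differentiable_exp).comp ((differentiable_const _).mul T.differentiable)
    have := Complex.norm_le_of_forall_mem_frontier_norm_le hb hd.diffContOnCl
      (C := 1) ?_ hzc
    · calc Real.exp (-(s * (T.eval z).im))
          = ‖Complex.exp ((s : ℂ) * Complex.I * T.eval z)‖ := by
            rw [Complex.norm_exp]
            congr 1
            simp [Complex.mul_re, Complex.mul_im]
        _ ≤ 1 := this
    · intro w hw
      have h0 := hfim w hw
      rw [Complex.norm_exp]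
      have : ((s : ℂ) * Complex.I * T.eval w).re = -(s * (T.eval w).im) := by
        simp [Complex.mul_re, Complex.mul_im]
      rw [this, h0]
      simp
  have hfim : ∀ w ∈ frontier U, (T.eval w).im = 0 := by
    intro w hw
    obtain ⟨r, h1, _, _⟩ := hfr hw
    rw [h1]; simp
  have h1 := him 1 (by simp) hfim 1 (Or.inl rfl)
  have h2 := him 1 (by simp) hfim (-1) (Or.inr rfl)
  have hi1 : -(1 * (T.eval z).im) ≤ 0 := by
    linarith [Real.add_one_le_exp (-(1 * (T.eval z).im)), h1]
  have hi2 : -((-1) * (T.eval z).im) ≤ 0 := by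
    linarith [Real.add_one_le_exp (-((-1) * (T.eval z).im)), h2]
  have himz : (T.eval z).im = 0 := by linarith [hi1, hi2]
  -- conclude z ∈ K, contradiction
  apply hz
  refine ⟨(T.eval z).re, ?_, ?_, ?_⟩
  · exact Complex.ext (by simp) (by simp [himz])
  · have := (Complex.abs_re_le_norm (T.eval z)).trans hTz
    have := abs_le.mp this
    linarith [this.1]
  · have := abs_le.mp ((Complex.abs_re_le_norm (T.eval z)).trans hTz)
    linarith [this.2]
end

section
/- Let T be a polynomial of degree n ≥ 1 with real coefficients, having n simple real zeros, and such that |T(z)| ≥ 1 at every critical point z of T. Then T⁻¹([−1,1]) ⊆ ℝ, i.e., every complex z with T(z) ∈ [−1,1] is real. -/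
/-!
Sort the roots `a₁ < ⋯ < aₙ` of `T`. Rolle's theorem gives a critical point between consecutive
roots, where `|T| ≥ 1`, and far to the left and right of all roots `|T| ≥ 1` as well. This yields
`n + 1` interlacing points at which `T` alternates in sign with `|T| ≥ 1`, so for `|r| < 1` the
polynomial `T - r` changes sign `n` times on `ℝ`; having degree `n`, it then has only real roots.
The endpoints `r = ±1` follow because a nonconstant complex polynomial is an open map, so that
`T⁻¹[-1, 1] ⊆ closure (T⁻¹(-1, 1)) ⊆ ℝ`.
-/

open Polynomial Set Filter

namespace Polynomial

theorem eval_eq_leadingCoeff_mul_prod_sub {R ι : Type*} [CommRing R] [IsDomain R] [Fintype ι]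
    {p : R[X]} {a : ι → R} (ha : Function.Injective a) (hcard : Fintype.card ι = p.natDegree)
    (hroot : ∀ i, p.IsRoot (a i)) (x : R) :
    p.eval x = p.leadingCoeff * ∏ i, (x - a i) := by
  rcases eq_or_ne p 0 with rfl | hp
  · simp
  have hle : Finset.univ.val.map a ≤ p.roots :=
    (Multiset.le_iff_subset (Finset.univ.nodup.map ha)).2 fun y hy => by
      obtain ⟨i, -, rfl⟩ := Multiset.mem_map.1 hy
      exact (mem_roots hp).2 (hroot i)
  have hroots : p.roots = Finset.univ.val.map a :=
    (Multiset.eq_of_le_of_card_le hle (by simpa [hcard] using card_roots' p)).symm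
  have hsplit : p.Splits := splits_iff_card_roots.2 (by simp [hroots, hcard])
  rw [hsplit.eval_eq_prod_roots, hroots, Multiset.map_map]
  rfl

theorem le_card_roots_of_sign_changes {Q : ℝ[X]} {n : ℕ} {p : Fin (n + 1) → ℝ}
    (hp : StrictMono p) (hsign : ∀ i : Fin n, Q.eval (p i.castSucc) * Q.eval (p i.succ) < 0) :
    n ≤ Multiset.card Q.roots := by
  classical
  have hroot : ∀ i : Fin n, ∃ c ∈ Ioo (p i.castSucc) (p i.succ), Q.IsRoot c := by
    intro i
    have hzero : (0 : ℝ) ∈ uIcc (Q.eval (p i.castSucc)) (Q.eval (p i.succ)) := by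
      rw [mem_uIcc]
      rcases (mul_neg_iff.1 (hsign i)) with h | h
      · exact Or.inr ⟨h.2.le, h.1.le⟩
      · exact Or.inl ⟨h.1.le, h.2.le⟩
    obtain ⟨c, hc, hQc⟩ := intermediate_value_uIcc Q.continuous.continuousOn hzero
    rw [uIcc_of_lt (hp Fin.castSucc_lt_succ)] at hc
    refine ⟨c, ⟨lt_of_le_of_ne hc.1 ?_, lt_of_le_of_ne hc.2 ?_⟩, hQc⟩ <;> rintro rfl <;>
      simpa [hQc] using hsign i
  choose c hc hQc using hroot
  have hc_mono : StrictMono c := fun i j hij =>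
    calc c i < p i.succ := (hc i).2
      _ ≤ p j.castSucc := hp.monotone (Fin.succ_le_castSucc_iff.2 hij)
      _ < c j := (hc j).1
  calc n = (Finset.univ.image c).card := by
        rw [Finset.card_image_of_injective _ hc_mono.injective, Finset.card_fin]
    _ ≤ Q.roots.toFinset.card := Finset.card_le_card fun x hx => by
        obtain ⟨i, -, rfl⟩ := Finset.mem_image.1 hx
        have hQ : Q ≠ 0 := by rintro rfl; simpa using hsign i
        exact Multiset.mem_toFinset.2 ((mem_roots hQ).2 (hQc i))
    _ ≤ Multiset.card Q.roots := Multiset.toFinset_card_le _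

theorem isOpenMap_eval {f : ℂ[X]} (hf : 0 < f.natDegree) : IsOpenMap fun z => f.eval z := by
  refine (AnalyticOnNhd.is_constant_or_isOpenMap fun z _ =>
    f.differentiable.analyticAt z).resolve_left ?_
  rintro ⟨w, hw⟩
  have : f = C w := Polynomial.funext fun z => by simpa using hw z
  simp [this] at hf

end Polynomial

theorem prod_sub_mul_prod_sub_neg {ι : Type*} [Fintype ι] {a : ι → ℝ} {x y : ℝ} (i : ι)
    (hx : x < a i) (hy : a i < y) (h : ∀ j ≠ i, 0 < (x - a j) * (y - a j)) :
    (∏ j, (x - a j)) * ∏ j, (y - a j) < 0 := by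
  classical
  rw [← Finset.prod_mul_distrib, ← Finset.mul_prod_erase _ _ (Finset.mem_univ i)]
  exact mul_neg_of_neg_of_pos (mul_neg_of_neg_of_pos (by linarith) (by linarith))
    (Finset.prod_pos fun j hj => h j (Finset.ne_of_mem_erase hj))

theorem sub_mul_sub_neg_of_mul_neg {u v r c : ℝ} (huv : u * v < 0) (hu : c ≤ |u|) (hv : c ≤ |v|)
    (hr : |r| < c) : (u - r) * (v - r) < 0 := by
  rw [abs_lt] at hr
  rcases mul_neg_iff.1 huv with h | h
  · rw [abs_of_pos h.1] at hu; rw [abs_of_neg h.2] at hv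
    exact mul_neg_of_pos_of_neg (by linarith) (by linarith)
  · rw [abs_of_neg h.1] at hu; rw [abs_of_pos h.2] at hv
    exact mul_neg_of_neg_of_pos (by linarith) (by linarith)

section RealRooted

variable {T : ℝ[X]} {n : ℕ} {a : Fin n → ℝ}

theorem exists_interlacing_one_le_abs_eval (hdeg : 0 < T.degree) (ha : StrictMono a)
    (hroot : ∀ i, T.IsRoot (a i)) (hcrit : ∀ x, T.derivative.eval x = 0 → 1 ≤ |T.eval x|) :
    ∃ p : Fin (n + 1) → ℝ,
      (∀ i, p i.castSucc < a i ∧ a i < p i.succ) ∧ ∀ k, 1 ≤ |T.eval (p k)| := by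
  suffices ∀ k : Fin (n + 1), ∃ x, (∀ i : Fin n, i.castSucc < k → a i < x) ∧
      (∀ i : Fin n, k ≤ i.castSucc → x < a i) ∧ 1 ≤ |T.eval x| by
    choose p hp using this
    exact ⟨p, fun i => ⟨(hp _).2.1 i le_rfl, (hp _).1 i Fin.castSucc_lt_succ⟩, fun k => (hp k).2.2⟩
  intro k
  by_cases hk0 : k = 0
  · obtain ⟨x, hx, hTx⟩ := ((eventually_all.2 fun i => eventually_lt_atBot (a i)).and
      ((abs_tendsto_atBot T hdeg).eventually_ge_atTop 1)).exists
    exact ⟨x, fun i hi => absurd hi (hk0 ▸ Fin.not_lt_zero _), fun i _ => hx i, hTx⟩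
  by_cases hkn : k = Fin.last n
  · obtain ⟨x, hx, hTx⟩ := ((eventually_all.2 fun i => eventually_gt_atTop (a i)).and
      ((abs_tendsto_atTop T hdeg).eventually_ge_atTop 1)).exists
    exact ⟨x, fun i _ => hx i, fun i hi => absurd hi (hkn ▸ not_le.2 (Fin.castSucc_lt_last i)),
      hTx⟩
  have hk0' : k.val ≠ 0 := fun h => hk0 (Fin.ext h)
  have hkn' : k.val ≠ n := fun h => hkn (Fin.ext h)
  have hk := k.isLt
  have hij : a ⟨k.val - 1, by omega⟩ < a ⟨k.val, by omega⟩ :=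
    ha (Fin.lt_def.2 (show k.val - 1 < k.val by omega))
  obtain ⟨ξ, hξ, hξ'⟩ := exists_deriv_eq_zero hij T.continuousOn ((hroot _).trans (hroot _).symm)
  rw [Polynomial.deriv] at hξ'
  refine ⟨ξ, fun m hm => ?_, fun m hm => ?_, hcrit ξ hξ'⟩
  · have hm' : m.val < k.val := Fin.lt_def.1 hm
    exact (ha.monotone (Fin.le_def.2 (show m.val ≤ k.val - 1 by omega))).trans_lt hξ.1
  · exact hξ.2.trans_le (ha.monotone hm)

theorem eval_mul_eval_neg_of_interlacing (hdeg : T.natDegree = n) (ha : StrictMono a)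
    (hroot : ∀ i, T.IsRoot (a i)) {p : Fin (n + 1) → ℝ}
    (hp : ∀ i, p i.castSucc < a i ∧ a i < p i.succ) (i : Fin n) :
    T.eval (p i.castSucc) * T.eval (p i.succ) < 0 := by
  have hp_mono : StrictMono p := Fin.strictMono_iff_lt_succ.2 fun i => (hp i).1.trans (hp i).2
  have hT : T ≠ 0 := by
    rintro rfl
    rw [natDegree_zero] at hdeg
    exact absurd hdeg (Nat.pos_iff_ne_zero.1 i.pos).symm
  simp only [eval_eq_leadingCoeff_mul_prod_sub ha.injective (by simp [hdeg]) hroot]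
  rw [mul_mul_mul_comm]
  refine mul_neg_of_pos_of_neg (mul_self_pos.2 (leadingCoeff_ne_zero.2 hT))
    (prod_sub_mul_prod_sub_neg i (hp i).1 (hp i).2 fun j hji => ?_)
  rcases lt_or_gt_of_ne hji with hj | hj
  · have hj_left : a j < p i.castSucc :=
      (hp j).2.trans_le (hp_mono.monotone (Fin.succ_le_castSucc_iff.2 hj))
    exact mul_pos (by linarith) (by linarith [(hp i).1, (hp i).2])
  · have hj_right : p i.succ < a j :=
      (hp_mono.monotone (Fin.succ_le_castSucc_iff.2 hj)).trans_lt (hp j).1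
    exact mul_pos_of_neg_of_neg (by linarith [(hp i).1, (hp i).2]) (by linarith)

theorem im_eq_zero_of_eval_map_eq_of_abs_lt (hn : 0 < n) (hdeg : T.natDegree = n)
    (ha : StrictMono a) (hroot : ∀ i, T.IsRoot (a i))
    (hcrit : ∀ x, T.derivative.eval x = 0 → 1 ≤ |T.eval x|) {r : ℝ} (hr : |r| < 1) {z : ℂ}
    (hz : (T.map (algebraMap ℝ ℂ)).eval z = r) : z.im = 0 := by
  obtain ⟨p, hp, hTp⟩ := exists_interlacing_one_le_abs_eval
    (natDegree_pos_iff_degree_pos.1 (hdeg ▸ hn)) ha hroot hcrit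
  have hp_mono : StrictMono p := Fin.strictMono_iff_lt_succ.2 fun i => (hp i).1.trans (hp i).2
  have hQdeg : (T - C r).natDegree = n := by rw [natDegree_sub_C, hdeg]
  have hQroots : n ≤ Multiset.card (T - C r).roots :=
    le_card_roots_of_sign_changes hp_mono fun i => by
      simpa using sub_mul_sub_neg_of_mul_neg
        (eval_mul_eval_neg_of_interlacing hdeg ha hroot hp i) (hTp _) (hTp _) hr
  have hsplit : (T - C r).Splits :=
    splits_iff_card_roots.2 (le_antisymm (card_roots' _) (hQdeg ▸ hQroots))
  have hQ0 : T - C r ≠ 0 := ne_zero_of_natDegree_gt (hQdeg ▸ hn)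
  obtain ⟨x, rfl⟩ := hsplit.mem_range_of_isRoot hQ0 (i := algebraMap ℝ ℂ) (x := z) (by simp [hz])
  simp

end RealRooted

theorem inverse_image_real (T : Polynomial ℝ) (n : ℕ) (hn : 1 ≤ n)
    (hdeg : T.natDegree = n)
    (hroots : ∃ S : Finset ℝ, S.card = n ∧ ∀ x ∈ S, T.eval x = 0)
    (hcrit : ∀ z : ℂ, (derivative (T.map (algebraMap ℝ ℂ))).eval z = 0 →
      1 ≤ ‖(T.map (algebraMap ℝ ℂ)).eval z‖) :
    ∀ z : ℂ, (∃ r : ℝ, (T.map (algebraMap ℝ ℂ)).eval z = (r : ℂ) ∧ -1 ≤ r ∧ r ≤ 1) →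
      z.im = 0 := by
  rintro z ⟨r, hz, hr⟩
  obtain ⟨S, hScard, hSroot⟩ := hroots
  have hcritR : ∀ x : ℝ, T.derivative.eval x = 0 → 1 ≤ |T.eval x| := fun x hx => by
    simpa [← Complex.coe_algebraMap, derivative_map, eval_map_algebraMap, aeval_algebraMap_apply,
      hx] using hcrit x
  have hinterior : (fun w => (T.map (algebraMap ℝ ℂ)).eval w) ⁻¹' (Complex.ofReal '' Ioo (-1) 1)
      ⊆ {w | w.im = 0} := by
    rintro w ⟨s, hs, hw⟩
    exact im_eq_zero_of_eval_map_eq_of_abs_lt hn hdeg (S.orderEmbOfFin hScard).strictMono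
      (fun i => hSroot _ (S.orderEmbOfFin_mem hScard i)) hcritR (abs_lt.2 ⟨hs.1, hs.2⟩) hw.symm
  have hclosure : closure (Complex.ofReal '' Ioo (-1 : ℝ) 1) = Complex.ofReal '' Icc (-1) 1 := by
    rw [Complex.isometry_ofReal.isClosedEmbedding.closure_image_eq, closure_Ioo (by norm_num)]
  have hopen := isOpenMap_eval (f := T.map (algebraMap ℝ ℂ)) (by rw [natDegree_map]; omega)
  refine (isClosed_eq Complex.continuous_im continuous_const).closure_subset_iff.2 hinterior
    (hopen.preimage_closure_subset_closure_preimage ?_)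
  rw [hclosure]
  exact ⟨r, hr, hz.symm⟩
end
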